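/- For s ≥ 1 and a connected manifold M with more than one point, a subset 𝒩 of ℐ = {I ⊆ {1,...,s} : |I| ≥ 2} is a nest (any two overlapping members are nested) if and only if the corresponding set of diagonals {Δ_I : I ∈ 𝒩} is a 𝒢^FM-nest of the Fulton–MacPherson building set on M^s. -/

import Mathlib

open Set

variable {E : Type*} [NormedAddCommGroup E] [NormedSpace ℝ E]

/-- `S ⊆ E` is an embedded submanifold of dimension `d`: around every point of `S` there is a
smooth chart (with smooth inverse) of the ambient space taking `S` to a `d`-dimensional linear
subspace. -/
def IsSubmanifoldOfDim (d : ℕ) (S : Set E) : Prop :=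
  ∀ p ∈ S, ∃ (φ : PartialHomeomorph E E) (F : Submodule ℝ E),
    p ∈ φ.source ∧ ContDiffOn ℝ (⊤ : ℕ∞) φ φ.source ∧ ContDiffOn ℝ (⊤ : ℕ∞) φ.symm φ.target ∧
    Module.finrank ℝ F = d ∧ φ.source ∩ S = φ.source ∩ φ ⁻¹' (F : Set E)

/-- A collection `𝒮` of submanifolds intersects cleanly: the intersection is a submanifold and
its tangent spaces (tangent cones) are the intersections of the tangent spaces of the members. -/
def CleanIntersection (𝒮 : Set (Set E)) : Prop :=
  (∃ d, IsSubmanifoldOfDim d (⋂₀ 𝒮)) ∧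
    ∀ p ∈ ⋂₀ 𝒮, tangentConeAt ℝ (⋂₀ 𝒮) p = ⋂ S ∈ 𝒮, tangentConeAt ℝ S p

variable (𝒢 : Set (Set E))

/-- A building set over `E`: a collection of non-empty, topologically closed, embedded
submanifolds of positive codimension, any subcollection of which intersects cleanly in a
connected submanifold. -/
structure IsBuildingSet [FiniteDimensional ℝ E] : Prop where
  nonempty : ∀ G ∈ 𝒢, G.Nonempty
  isClosed : ∀ G ∈ 𝒢, IsClosed G
  submanifold : ∀ G ∈ 𝒢, ∃ d, d < Module.finrank ℝ E ∧ IsSubmanifoldOfDim d G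
  clean : ∀ 𝒮 ⊆ 𝒢, CleanIntersection 𝒮
  preconnected : ∀ 𝒮 ⊆ 𝒢, IsPreconnected (⋂₀ 𝒮)

/-- The arrangement induced by `𝒢`: all intersections of subcollections of `𝒢`
(with `⋂₀ ∅ = univ`, i.e. the whole manifold). -/
def Arr : Set (Set E) := {S | ∃ 𝒮 ⊆ 𝒢, S = ⋂₀ 𝒮}

/-- The `𝒢`-factors of `S`: the minimal elements of `{G ∈ 𝒢 | S ⊆ G}`. -/
def factors (S : Set E) : Set (Set E) :=
  {G | G ∈ 𝒢 ∧ S ⊆ G ∧ ∀ G' ∈ 𝒢, S ⊆ G' → G' ⊆ G → G' = G}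

/-- A collection of submanifolds intersects transversely: it intersects cleanly and the
codimension of the intersection is the sum of the codimensions. -/
def TransverseIntersection [FiniteDimensional ℝ E] (𝒮 : Set (Set E)) : Prop :=
  CleanIntersection 𝒮 ∧
    ∃ (T : Finset (Set E)) (dims : Set E → ℕ) (d : ℕ),
      ↑T = 𝒮 ∧ (∀ S ∈ T, IsSubmanifoldOfDim (dims S) S) ∧
      IsSubmanifoldOfDim d (⋂₀ 𝒮) ∧
      Module.finrank ℝ E - d = ∑ S ∈ T, (Module.finrank ℝ E - dims S)

/-- A building set is separated if the `𝒢`-factors of every element of the induced arrangement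
intersect transversely. -/
def IsSeparated [FiniteDimensional ℝ E] : Prop :=
  ∀ S ∈ Arr 𝒢, TransverseIntersection (factors 𝒢 S)

/-- A `𝒢`-flag: a chain `∅ ⊊ S 0 ⊊ S 1 ⊊ ... ⊊ S (l-1) ⊊ M` of elements of the arrangement. -/
def IsFlag (l : ℕ) (S : Fin l → Set E) : Prop :=
  (∀ i, S i ∈ Arr 𝒢) ∧ (∀ i, (S i).Nonempty) ∧ (∀ i, S i ≠ univ) ∧
    ∀ i j, i < j → S i ⊂ S j

/-- A `𝒢`-nest: the union of the sets of `𝒢`-factors of the members of some `𝒢`-flag. -/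
def IsNest (𝒩 : Set (Set E)) : Prop :=
  ∃ (l : ℕ) (S : Fin l → Set E), IsFlag 𝒢 l S ∧ 𝒩 = ⋃ i, factors 𝒢 (S i)

/-- A collection is pairwise non-comparable if no member is contained in another. -/
def PairwiseNoncomparable (𝒞 : Set (Set E)) : Prop :=
  ∀ P ∈ 𝒞, ∀ Q ∈ 𝒞, P ≠ Q → ¬ P ⊆ Q ∧ ¬ Q ⊆ P

variable (V : Type*) [NormedAddCommGroup V] [NormedSpace ℝ V]

/-- The diagonal `Δ_I ⊆ M^s` where all coordinates indexed by `I` agree.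
Here the connected manifold `M` is modelled by the vector space `V`. -/
def diagonal (s : ℕ) (I : Set (Fin s)) : Set (Fin s → V) :=
  {p | ∀ i ∈ I, ∀ j ∈ I, p i = p j}

/-- The Fulton–MacPherson building set on `M^s`: all diagonals `Δ_I` for `|I| ≥ 2`. -/
def FMBuildingSet (s : ℕ) : Set (Set (Fin s → V)) :=
  {S | ∃ I : Set (Fin s), 2 ≤ I.ncard ∧ S = diagonal V s I}

section FMAuxCore
namespace FMAux


set_option linter.unusedSectionVars false

variable {V} {s : ℕ}

def diag (V : Type*) [NormedAddCommGroup V] (s : ℕ) (I : Set (Fin s)) : Set (Fin s → V) :=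
  {p | ∀ i ∈ I, ∀ j ∈ I, p i = p j}

lemma mem_diag {I : Set (Fin s)} {p : Fin s → V} :
    p ∈ diagonal V s I ↔ ∀ i ∈ I, ∀ j ∈ I, p i = p j := Iff.rfl

/-- The base relation of a family of index sets. -/
def brel (F : Set (Set (Fin s))) (i j : Fin s) : Prop := ∃ I ∈ F, i ∈ I ∧ j ∈ I

/-- The equivalence generated: `i` and `j` are connected through the family `F`. -/
def Rel (F : Set (Set (Fin s))) : Fin s → Fin s → Prop := Relation.EqvGen (brel F)

lemma Rel.refl (F : Set (Set (Fin s))) (x : Fin s) : Rel F x x := Relation.EqvGen.refl x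

lemma Rel.symm {F : Set (Set (Fin s))} {x y : Fin s} (h : Rel F x y) : Rel F y x :=
  Relation.EqvGen.symm x y h

lemma Rel.trans {F : Set (Set (Fin s))} {x y z : Fin s} (h1 : Rel F x y) (h2 : Rel F y z) :
    Rel F x z := Relation.EqvGen.trans x y z h1 h2

lemma Rel.of_mem {F : Set (Set (Fin s))} {I : Set (Fin s)} (hI : I ∈ F) {x y : Fin s}
    (hx : x ∈ I) (hy : y ∈ I) : Rel F x y := Relation.EqvGen.rel x y ⟨I, hI, hx, hy⟩

lemma diag_mono {I J : Set (Fin s)} (h : I ⊆ J) : diagonal V s J ⊆ diagonal V s I :=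
  fun _ hp i hi j hj => hp i (h hi) j (h hj)

lemma apply_eq_of_rel {F : Set (Set (Fin s))} {p : Fin s → V}
    (hp : p ∈ ⋂₀ (diagonal V s '' F)) {i j : Fin s} (h : Rel F i j) : p i = p j := by
  induction h with
  | rel a b hab =>
    obtain ⟨I, hI, ha, hb⟩ := hab
    exact hp (diagonal V s I) ⟨I, hI, rfl⟩ a ha b hb
  | refl a => rfl
  | symm a b _ ih => exact ih.symm
  | trans a b c _ _ ih1 ih2 => exact ih1.trans ih2

/-- The indicator-style witness function of the `Rel`-class of `b`. -/
noncomputable def wit (F : Set (Set (Fin s))) (b : Fin s) (v : V) : Fin s → V :=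
  fun x => @ite _ (Rel F b x) (Classical.propDecidable _) v 0

lemma wit_pos {F : Set (Set (Fin s))} {b x : Fin s} (v : V) (h : Rel F b x) :
    wit F b v x = v := by simp only [wit, if_pos h]

lemma wit_neg {F : Set (Set (Fin s))} {b x : Fin s} (v : V) (h : ¬ Rel F b x) :
    wit F b v x = 0 := by simp only [wit, if_neg h]

lemma witness_mem (F : Set (Set (Fin s))) (b : Fin s) (v : V) :
    wit F b v ∈ ⋂₀ (diagonal V s '' F) := by
  rintro X ⟨I, hI, rfl⟩
  intro i hi j hj
  have hiff : Rel F b i ↔ Rel F b j :=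
    ⟨fun h => h.trans (Rel.of_mem hI hi hj), fun h => h.trans (Rel.of_mem hI hj hi)⟩
  by_cases h : Rel F b i
  · rw [wit_pos v h, wit_pos v (hiff.mp h)]
  · rw [wit_neg v h, wit_neg v (fun h' => h (hiff.mpr h'))]

lemma sInter_subset_diag_iff [Nontrivial V] {F : Set (Set (Fin s))} {B : Set (Fin s)} :
    ⋂₀ (diagonal V s '' F) ⊆ diagonal V s B ↔ ∀ b ∈ B, ∀ b' ∈ B, Rel F b b' := by
  classical
  constructor
  · intro h b hb b' hb'
    by_contra hnr
    obtain ⟨v, hv⟩ := exists_ne (0 : V)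
    have hp := h (witness_mem F b v)
    have := hp b hb b' hb'
    rw [wit_pos v (Rel.refl F b), wit_neg v hnr] at this
    exact hv this
  · intro h p hp i hi j hj
    exact apply_eq_of_rel hp (h i hi j hj)

lemma diag_subset_diag [Nontrivial V] {B G : Set (Fin s)} (hG : 2 ≤ G.ncard) :
    diagonal V s B ⊆ diagonal V s G ↔ G ⊆ B := by
  classical
  constructor
  · intro h g hg
    by_contra hgB
    obtain ⟨v, hv⟩ := exists_ne (0 : V)
    obtain ⟨a, ha, b, hb, hab⟩ := (Set.one_lt_ncard (Set.toFinite G)).mp hG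
    obtain ⟨g2, hg2, hg2g⟩ : ∃ g2 ∈ G, g2 ≠ g := by
      by_cases hag : a = g
      · exact ⟨b, hb, fun hbg => hab (hag.trans hbg.symm)⟩
      · exact ⟨a, ha, hag⟩
    have hpB : (fun x => if x = g then v else (0 : V)) ∈ diagonal V s B := by
      intro i hi j hj
      have hi' : i ≠ g := fun h => hgB (h ▸ hi)
      have hj' : j ≠ g := fun h => hgB (h ▸ hj)
      simp only
      rw [if_neg hi', if_neg hj']
    have := h hpB g hg g2 hg2
    simp only [if_pos rfl, if_neg hg2g] at this
    exact hv this
  · exact diag_mono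

lemma diag_ne_univ [Nontrivial V] {G : Set (Fin s)} (hG : 2 ≤ G.ncard) :
    diagonal V s G ≠ univ := by
  classical
  intro h
  obtain ⟨v, hv⟩ := exists_ne (0 : V)
  obtain ⟨a, ha, b, hb, hab⟩ := (Set.one_lt_ncard (Set.toFinite G)).mp hG
  have hp : (fun x => if x = a then v else (0 : V)) ∈ diagonal V s G := h.symm ▸ mem_univ _
  have := hp a ha b hb
  simp only [if_pos rfl, if_neg (Ne.symm hab)] at this
  exact hv this

lemma diag_inj [Nontrivial V] {B G : Set (Fin s)} (hB : 2 ≤ B.ncard) (hG : 2 ≤ G.ncard)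
    (h : diagonal V s B = diagonal V s G) : B = G :=
  subset_antisymm ((diag_subset_diag hB).mp h.symm.subset) ((diag_subset_diag hG).mp h.subset)

end FMAux
end FMAuxCore

section FMAuxMore
namespace FMAux
variable {V} {s : ℕ}
set_option linter.unusedSectionVars false

lemma fm_mem {X : Set (Fin s → V)} :
    X ∈ FMBuildingSet V s ↔ ∃ I : Set (Fin s), 2 ≤ I.ncard ∧ X = diagonal V s I := Iff.rfl

/-- Characterization of the factors of a polydiagonal: the diagonals of the non-singleton
`Rel`-classes. -/
lemma mem_factors_iff [Nontrivial V] (F : Set (Set (Fin s))) (X : Set (Fin s → V)) :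
    X ∈ factors (FMBuildingSet V s) (⋂₀ (diagonal V s '' F)) ↔
      ∃ G g, X = diagonal V s G ∧ 2 ≤ G.ncard ∧ ∀ x, x ∈ G ↔ Rel F g x := by
  constructor
  · rintro ⟨⟨I, hI2, rfl⟩, hsub, hmin⟩
    have hpair : ∀ b ∈ I, ∀ b' ∈ I, Rel F b b' := sInter_subset_diag_iff.mp hsub
    obtain ⟨g, hg⟩ : I.Nonempty := (Set.ncard_pos (Set.toFinite I)).mp (by omega)
    set C : Set (Fin s) := {x | Rel F g x} with hC
    have hIC : I ⊆ C := fun x hx => hpair g hg x hx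
    have hC2 : 2 ≤ C.ncard := le_trans hI2 (Set.ncard_le_ncard hIC (Set.toFinite C))
    have hCpair : ∀ x ∈ C, ∀ y ∈ C, Rel F x y := fun x hx y hy => (Rel.symm hx).trans hy
    have heq := hmin (diagonal V s C) ⟨C, hC2, rfl⟩ (sInter_subset_diag_iff.mpr hCpair)
      (diag_mono hIC)
    exact ⟨C, g, heq.symm, hC2, fun x => Iff.rfl⟩
  · rintro ⟨G, g, rfl, hG2, hclass⟩
    have hg : g ∈ G := (hclass g).mpr (Rel.refl F g)
    have hGpair : ∀ x ∈ G, ∀ y ∈ G, Rel F x y :=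
      fun x hx y hy => (Rel.symm ((hclass x).mp hx)).trans ((hclass y).mp hy)
    refine ⟨⟨G, hG2, rfl⟩, sInter_subset_diag_iff.mpr hGpair, ?_⟩
    rintro X' ⟨B, hB2, rfl⟩ hsubB hBG
    have hBpair := sInter_subset_diag_iff.mp hsubB
    have hGB : G ⊆ B := (diag_subset_diag hG2).mp hBG
    have hBG' : B = G :=
      subset_antisymm (fun b hb => (hclass b).mpr (hBpair g (hGB hg) b hb)) hGB
    rw [hBG']

section Nest

variable {N𝒩 : Set (Set (Fin s))}
  (hnest : ∀ A ∈ N𝒩, ∀ B ∈ N𝒩, (A ∩ B).Nonempty → A ⊆ B ∨ B ⊆ A)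

include hnest

/-- `T` is the largest member of `F` containing `x`. -/
def MaxAt (F : Set (Set (Fin s))) (T : Set (Fin s)) (x : Fin s) : Prop :=
  T ∈ F ∧ x ∈ T ∧ ∀ Q ∈ F, x ∈ Q → Q ⊆ T

lemma exists_maxAt {F : Set (Set (Fin s))} (hF : F ⊆ N𝒩) {m : Fin s}
    (h : ∃ P ∈ F, m ∈ P) : ∃ T, MaxAt F T m := by
  obtain ⟨P, hP, hmP⟩ := h
  obtain ⟨T, ⟨hT, hmT⟩, hmax⟩ :=
    Set.Finite.exists_maximalFor id {Q | Q ∈ F ∧ m ∈ Q} (Set.toFinite _) ⟨P, hP, hmP⟩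
  refine ⟨T, hT, hmT, fun Q hQ hmQ => ?_⟩
  rcases hnest Q (hF hQ) T (hF hT) ⟨m, hmQ, hmT⟩ with h | h
  · exact h
  · exact hmax ⟨hQ, hmQ⟩ h

omit hnest in
lemma rel_eq_or_mem {F : Set (Set (Fin s))} {x y : Fin s} (h : Rel F x y) :
    x = y ∨ ((∃ P ∈ F, x ∈ P) ∧ ∃ P ∈ F, y ∈ P) := by
  induction h with
  | rel a b hab =>
    obtain ⟨I, hI, ha, hb⟩ := hab
    exact Or.inr ⟨⟨I, hI, ha⟩, ⟨I, hI, hb⟩⟩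
  | refl a => exact Or.inl rfl
  | symm a b _ ih =>
    rcases ih with h | ⟨h1, h2⟩
    · exact Or.inl h.symm
    · exact Or.inr ⟨h2, h1⟩
  | trans a b c _ _ ih1 ih2 =>
    rcases ih1 with rfl | ⟨h1, h2⟩
    · exact ih2
    · rcases ih2 with rfl | ⟨h3, h4⟩
      · exact Or.inr ⟨h1, h2⟩
      · exact Or.inr ⟨h1, h4⟩

lemma maxAt_of_brel {F : Set (Set (Fin s))} (hF : F ⊆ N𝒩) {x y : Fin s} {T : Set (Fin s)}
    (hxy : brel F x y) (hT : MaxAt F T x) : MaxAt F T y := by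
  obtain ⟨I, hI, hx, hy⟩ := hxy
  obtain ⟨hTF, hxT, hmax⟩ := hT
  have hIT : I ⊆ T := hmax I hI hx
  refine ⟨hTF, hIT hy, fun Q hQ hyQ => ?_⟩
  rcases hnest Q (hF hQ) T (hF hTF) ⟨y, hyQ, hIT hy⟩ with h | h
  · exact h
  · exact hmax Q hQ (h hxT)

lemma maxAt_iff_of_rel {F : Set (Set (Fin s))} (hF : F ⊆ N𝒩) {x y : Fin s}
    (h : Rel F x y) (T : Set (Fin s)) : MaxAt F T x ↔ MaxAt F T y := by
  induction h with
  | rel a b hab =>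
    obtain ⟨I, hI, ha, hb⟩ := hab
    exact ⟨maxAt_of_brel hnest hF ⟨I, hI, ha, hb⟩, maxAt_of_brel hnest hF ⟨I, hI, hb, ha⟩⟩
  | refl a => exact Iff.rfl
  | symm a b _ ih => exact ih.symm
  | trans a b c _ _ ih1 ih2 => exact ih1.trans ih2

lemma mem_of_rel_maxAt {F : Set (Set (Fin s))} (hF : F ⊆ N𝒩) {x y : Fin s}
    {T : Set (Fin s)} (hT : MaxAt F T x) (h : Rel F x y) : y ∈ T :=
  ((maxAt_iff_of_rel hnest hF h T).mp hT).2.1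

/-- The depth of `N` in the family: the number of members containing it. -/
noncomputable def depth (N𝒩 : Set (Set (Fin s))) (N : Set (Fin s)) : ℕ := {M | M ∈ N𝒩 ∧ N ⊆ M}.ncard

omit hnest in
lemma one_le_depth {N : Set (Fin s)} (hN : N ∈ N𝒩) : 1 ≤ depth N𝒩 N :=
  (Set.ncard_pos (Set.toFinite _)).mpr ⟨N, hN, subset_rfl⟩

omit hnest in
lemma depth_lt_depth {N M : Set (Fin s)} (hN : N ∈ N𝒩) (h : N ⊂ M) :
    depth N𝒩 M < depth N𝒩 N := by
  apply Set.ncard_lt_ncard _ (Set.toFinite _)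
  refine ⟨?_, fun hsub => h.not_subset (hsub ⟨hN, Set.Subset.rfl⟩).2⟩
  rintro P ⟨hP, hMP⟩
  exact ⟨hP, h.subset.trans hMP⟩

lemma exists_depth_pred {M : Set (Fin s)} (hM : M ∈ N𝒩) (hMne : M.Nonempty)
    (h2 : 2 ≤ depth N𝒩 M) : ∃ M' ∈ N𝒩, depth N𝒩 M' = depth N𝒩 M - 1 := by
  set A : Set (Set (Fin s)) := {P | P ∈ N𝒩 ∧ M ⊆ P} \ {M} with hA
  have hAne : A.Nonempty := by
    obtain ⟨a, ha, b, hb, hab⟩ := (Set.one_lt_ncard (Set.toFinite _)).mp h2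
    by_cases haM : a = M
    · exact ⟨b, hb, fun h => hab (haM.trans (Set.mem_singleton_iff.mp h).symm)⟩
    · exact ⟨a, ha, haM⟩
  obtain ⟨M', hM'A, hmin⟩ := Set.Finite.exists_minimalFor id A (Set.toFinite _) hAne
  obtain ⟨⟨hM'N, hMM'⟩, hM'ne⟩ := hM'A
  have hM'neM : M' ≠ M := hM'ne
  have key : {P | P ∈ N𝒩 ∧ M' ⊆ P} = A := by
    ext P
    constructor
    · rintro ⟨hP, hM'P⟩
      refine ⟨⟨hP, hMM'.trans hM'P⟩, ?_⟩
      rintro rfl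
      exact hM'neM (subset_antisymm hM'P hMM')
    · rintro ⟨⟨hP, hMP⟩, hPne⟩
      have hPneM : P ≠ M := hPne
      refine ⟨hP, ?_⟩
      rcases hnest P hP M' hM'N ⟨hMne.choose, hMP hMne.choose_spec, hMM' hMne.choose_spec⟩
        with h | h
      · exact hmin ⟨⟨hP, hMP⟩, hPneM⟩ h
      · exact h
  refine ⟨M', hM'N, ?_⟩
  have hstep : depth N𝒩 M' = ({P | P ∈ N𝒩 ∧ M ⊆ P} \ {M}).ncard := by
    unfold depth
    rw [key]
  rw [hstep, Set.ncard_diff_singleton_of_mem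
    (show M ∈ {P | P ∈ N𝒩 ∧ M ⊆ P} from ⟨hM, Set.Subset.rfl⟩)]
  rfl

lemma exists_depth_eq : ∀ n (M : Set (Fin s)), M ∈ N𝒩 → M.Nonempty → depth N𝒩 M = n →
    ∀ k, 1 ≤ k → k ≤ n → (∀ P ∈ N𝒩, P.Nonempty) → ∃ M' ∈ N𝒩, depth N𝒩 M' = k := by
  intro n
  induction n with
  | zero => intro M hM _ _ k h1 hk _; omega
  | succ n ih =>
    intro M hM hMne hd k h1 hk hne
    rcases Nat.eq_or_lt_of_le hk with heq | hlt
    · refine ⟨M, hM, ?_⟩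
      omega
    · have hkn : k ≤ n := by omega
      have h2 : 2 ≤ depth N𝒩 M := by omega
      obtain ⟨M', hM', hdM'⟩ := exists_depth_pred hnest hM hMne h2
      have : depth N𝒩 M' = n := by omega
      exact ih M' hM' (hne M' hM') this k h1 hkn hne

variable [Nontrivial V]

lemma factors_subset {F : Set (Set (Fin s))} (hF : F ⊆ N𝒩) :
    factors (FMBuildingSet V s) (⋂₀ (diagonal V s '' F)) ⊆ diagonal V s '' N𝒩 := by
  intro X hX
  obtain ⟨G, g, rfl, hG2, hclass⟩ := (mem_factors_iff F X).mp hX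
  obtain ⟨a, ha, b, hb, hab⟩ := (Set.one_lt_ncard (Set.toFinite G)).mp hG2
  have hga : Rel F g a := (hclass a).mp ha
  have hgb : Rel F g b := (hclass b).mp hb
  have hmem : ∃ P ∈ F, g ∈ P := by
    rcases rel_eq_or_mem hga with rfl | ⟨h1, _⟩
    · rcases rel_eq_or_mem hgb with rfl | ⟨h1, _⟩
      · exact absurd rfl hab
      · exact h1
    · exact h1
  obtain ⟨T, hT⟩ := exists_maxAt hnest hF hmem
  have hGT : G ⊆ T := fun x hx => mem_of_rel_maxAt hnest hF hT ((hclass x).mp hx)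
  have hTG : T ⊆ G := fun x hx => (hclass x).mpr (Rel.of_mem hT.1 hT.2.1 hx)
  have hGTeq : G = T := subset_antisymm hGT hTG
  exact ⟨G, hGTeq ▸ hF hT.1, rfl⟩

lemma diag_mem_factors (hcard : ∀ N ∈ N𝒩, 2 ≤ N.ncard) {N : Set (Fin s)} (hN : N ∈ N𝒩) :
    diagonal V s N ∈ factors (FMBuildingSet V s)
      (⋂₀ (diagonal V s '' {M | M ∈ N𝒩 ∧ depth N𝒩 N ≤ depth N𝒩 M})) := by
  set F := {M | M ∈ N𝒩 ∧ depth N𝒩 N ≤ depth N𝒩 M} with hFdef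
  have hF : F ⊆ N𝒩 := fun M hM => hM.1
  have hNF : N ∈ F := ⟨hN, le_refl _⟩
  obtain ⟨g, hg⟩ : N.Nonempty := by
    rw [← Set.ncard_pos (Set.toFinite N)]
    have := hcard N hN
    omega
  obtain ⟨T, hT⟩ := exists_maxAt hnest hF ⟨N, hNF, hg⟩
  have hNT : N ⊆ T := hT.2.2 N hNF hg
  have hTN : T = N := by
    by_contra hne
    have hss : N ⊂ T := ssubset_of_subset_of_ne hNT (fun h => hne h.symm)
    have hlt := depth_lt_depth hN hss
    have hge := hT.1.2
    omega
  refine (mem_factors_iff F _).mpr ⟨N, g, rfl, hcard N hN, fun x => ⟨?_, ?_⟩⟩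
  · intro hx
    exact Rel.of_mem hNF hg hx
  · intro hx
    exact hTN ▸ mem_of_rel_maxAt hnest hF hT hx

end Nest
end FMAux
end FMAuxMore

/-- for `s ≥ 1` and a connected manifold `M` (modelled by the nontrivial
vector space `V`) with more than one point, a set `𝒩` of index sets of cardinality `≥ 2`
is a nest (any two overlapping members are nested) if and only if the corresponding set of
diagonals `{Δ_I : I ∈ 𝒩}` is a nest of the Fulton–MacPherson building set on `M^s`. -/
theorem fm_nest_iff_nest [Nontrivial V] (s : ℕ) (hs : 1 ≤ s)
    (𝒩 : Set (Set (Fin s))) (h𝒩 : ∀ N ∈ 𝒩, 2 ≤ N.ncard) :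
    (∀ A ∈ 𝒩, ∀ B ∈ 𝒩, (A ∩ B).Nonempty → A ⊆ B ∨ B ⊆ A) ↔
      IsNest (FMBuildingSet V s) (diagonal V s '' 𝒩) := by
  classical
  constructor
  · -- a combinatorial nest gives a geometric nest
    intro hnest
    rcases Set.eq_empty_or_nonempty 𝒩 with rfl | ⟨N', hN'⟩
    · exact ⟨0, fun i => i.elim0,
        ⟨fun i => i.elim0, fun i => i.elim0, fun i => i.elim0, fun i _ _ => i.elim0⟩, by simp⟩
    have hfin : ((FMAux.depth 𝒩) '' 𝒩).Finite := Set.toFinite _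
    set l := sSup ((FMAux.depth 𝒩) '' 𝒩) with hl
    obtain ⟨N₀, hN₀, hdN₀⟩ : l ∈ (FMAux.depth 𝒩) '' 𝒩 :=
      Set.Nonempty.csSup_mem ⟨_, N', hN', rfl⟩ hfin
    have hle : ∀ N ∈ 𝒩, FMAux.depth 𝒩 N ≤ l := fun N hN => le_csSup hfin.bddAbove ⟨N, hN, rfl⟩
    have hl1 : 1 ≤ l := hdN₀ ▸ FMAux.one_le_depth hN₀
    have hnonempty𝒩 : ∀ P ∈ 𝒩, P.Nonempty := by
      intro P hP
      rw [← Set.ncard_pos (Set.toFinite P)]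
      have := h𝒩 P hP
      omega
    set 𝒜 : ℕ → Set (Set (Fin s)) := fun k => {M | M ∈ 𝒩 ∧ k ≤ FMAux.depth 𝒩 M} with h𝒜
    set S : Fin l → Set (Fin s → V) := fun i => ⋂₀ (diagonal V s '' 𝒜 (i.1 + 1)) with hS
    have h𝒜sub : ∀ k, 𝒜 k ⊆ 𝒩 := fun k M hM => hM.1
    have himg : ∀ k, diagonal V s '' 𝒜 k ⊆ FMBuildingSet V s := by
      rintro k X ⟨N, hN, rfl⟩
      exact ⟨N, h𝒩 N hN.1, rfl⟩
    have hcentral : ∀ k, (fun _ : Fin s => (0 : V)) ∈ ⋂₀ (diagonal V s '' 𝒜 k) := by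
      rintro k X ⟨N, hN, rfl⟩
      intro a _ b _
      rfl
    have hmono : ∀ {k k' : ℕ}, k ≤ k' →
        ⋂₀ (diagonal V s '' 𝒜 k) ⊆ ⋂₀ (diagonal V s '' 𝒜 k') := by
      intro k k' hkk'
      apply Set.sInter_subset_sInter
      apply Set.image_mono
      intro M hM
      exact ⟨hM.1, le_trans hkk' hM.2⟩
    have hstrict : ∀ i j : Fin l, i < j → S i ⊂ S j := by
      intro i j hij
      refine ssubset_of_subset_of_ne (hmono (by omega)) ?_
      have hjl := j.isLt
      have hij' : (i : ℕ) < j := hij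
      obtain ⟨M, hM, hdM⟩ := FMAux.exists_depth_eq hnest l N₀ hN₀ (hnonempty𝒩 N₀ hN₀) hdN₀
        j.1 (by omega) (by omega) hnonempty𝒩
      have hMi : M ∈ 𝒜 (i.1 + 1) := ⟨hM, by omega⟩
      have hnr : ∃ m ∈ M, ∃ m' ∈ M, ¬ FMAux.Rel (𝒜 (j.1 + 1)) m m' := by
        by_contra hall
        push_neg at hall
        obtain ⟨a, ha, b, hb, hab⟩ := (Set.one_lt_ncard (Set.toFinite M)).mp
          (by have := h𝒩 M hM; omega)
        have hPmem : ∃ P ∈ 𝒜 (j.1 + 1), a ∈ P := by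
          rcases FMAux.rel_eq_or_mem (hall a ha b hb) with rfl | ⟨h1, _⟩
          · exact absurd rfl hab
          · exact h1
        obtain ⟨T, hT⟩ := FMAux.exists_maxAt hnest (h𝒜sub _) hPmem
        have hMT : M ⊆ T :=
          fun x hx => FMAux.mem_of_rel_maxAt hnest (h𝒜sub _) hT (hall a ha x hx)
        have hTd : j.1 + 1 ≤ FMAux.depth 𝒩 T := hT.1.2
        rcases hMT.eq_or_ssubset with heq | hss
        · rw [heq] at hdM
          omega
        · have := FMAux.depth_lt_depth hM hss
          omega
      obtain ⟨m, hm, m', hm', hmm'⟩ := hnr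
      obtain ⟨v, hv⟩ := exists_ne (0 : V)
      intro heq
      have hpj : FMAux.wit (𝒜 (j.1 + 1)) m v ∈ S j := FMAux.witness_mem _ m v
      have hpi : FMAux.wit (𝒜 (j.1 + 1)) m v ∈ S i := by rw [heq]; exact hpj
      have hdiag : FMAux.wit (𝒜 (j.1 + 1)) m v ∈ diagonal V s M := hpi _ ⟨M, hMi, rfl⟩
      have heval := hdiag m hm m' hm'
      rw [FMAux.wit_pos v (FMAux.Rel.refl _ m), FMAux.wit_neg v hmm'] at heval
      exact hv heval
    have hneuniv : ∀ i : Fin l, S i ≠ univ := by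
      intro i h
      have hil := i.isLt
      have hsub : S i ⊆ diagonal V s N₀ := Set.sInter_subset_of_mem ⟨N₀, ⟨hN₀, by omega⟩, rfl⟩
      rw [h] at hsub
      exact FMAux.diag_ne_univ (h𝒩 N₀ hN₀) (univ_subset_iff.mp hsub)
    refine ⟨l, S, ⟨fun i => ⟨_, himg _, rfl⟩, fun i => ⟨_, hcentral _⟩, hneuniv, hstrict⟩, ?_⟩
    apply subset_antisymm
    · rintro X ⟨N, hN, rfl⟩
      have hdN1 : 1 ≤ FMAux.depth 𝒩 N := FMAux.one_le_depth hN
      have hdNl : FMAux.depth 𝒩 N ≤ l := hle N hN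
      refine Set.mem_iUnion.mpr ⟨⟨FMAux.depth 𝒩 N - 1, by omega⟩, ?_⟩
      have h1 : (FMAux.depth 𝒩 N - 1) + 1 = FMAux.depth 𝒩 N := by omega
      have hSi : S ⟨FMAux.depth 𝒩 N - 1, by omega⟩ =
          ⋂₀ (diagonal V s '' 𝒜 (FMAux.depth 𝒩 N)) := by
        rw [hS]
        simp only [h1]
      rw [hSi]
      exact FMAux.diag_mem_factors hnest h𝒩 hN
    · rintro X hX
      obtain ⟨i, hXi⟩ := Set.mem_iUnion.mp hX
      exact FMAux.factors_subset hnest (h𝒜sub _) hXi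
  · -- a geometric nest gives a combinatorial nest
    rintro ⟨l, S, ⟨hArr, hSne, hSuniv, hmono⟩, hUnion⟩ A hA B hB hAB
    have key : ∀ (A B : Set (Fin s)), A ∈ 𝒩 → B ∈ 𝒩 → (A ∩ B).Nonempty →
        ∀ i j : Fin l, i ≤ j → diagonal V s A ∈ factors (FMBuildingSet V s) (S i) →
        diagonal V s B ∈ factors (FMBuildingSet V s) (S j) → B ⊆ A := by
      intro A B hA hB hAB i j hij hfA hfB
      obtain ⟨𝒮, h𝒮, hSeq⟩ := hArr i
      have himg : diagonal V s '' {I | 2 ≤ I.ncard ∧ diagonal V s I ∈ 𝒮} = 𝒮 := by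
        apply subset_antisymm
        · rintro X ⟨I, hI, rfl⟩
          exact hI.2
        · intro X hX
          obtain ⟨I, hI2, rfl⟩ := h𝒮 hX
          exact ⟨I, ⟨hI2, hX⟩, rfl⟩
      have hSieq : S i = ⋂₀ (diagonal V s '' {I | 2 ≤ I.ncard ∧ diagonal V s I ∈ 𝒮}) := by
        rw [himg]
        exact hSeq
      rw [hSieq] at hfA
      obtain ⟨G, g, hAG, hG2, hclass⟩ := (FMAux.mem_factors_iff _ _).mp hfA
      have hAeq : A = G := FMAux.diag_inj (h𝒩 A hA) hG2 hAG
      have hij' : S i ⊆ S j := by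
        rcases eq_or_lt_of_le hij with rfl | h
        · exact subset_rfl
        · exact (hmono i j h).subset
      have hsubB : ⋂₀ (diagonal V s '' {I | 2 ≤ I.ncard ∧ diagonal V s I ∈ 𝒮}) ⊆
          diagonal V s B := by
        rw [← hSieq]
        exact hij'.trans hfB.2.1
      have hBpair := FMAux.sInter_subset_diag_iff.mp hsubB
      obtain ⟨x, hxA, hxB⟩ := hAB
      rw [hAeq] at hxA ⊢
      intro b hb
      exact (hclass b).mpr (((hclass x).mp hxA).trans (hBpair x hxB b hb))
    have hAmem : diagonal V s A ∈ ⋃ i, factors (FMBuildingSet V s) (S i) := by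
      rw [← hUnion]
      exact Set.mem_image_of_mem _ hA
    have hBmem : diagonal V s B ∈ ⋃ i, factors (FMBuildingSet V s) (S i) := by
      rw [← hUnion]
      exact Set.mem_image_of_mem _ hB
    obtain ⟨i, hAi⟩ := Set.mem_iUnion.mp hAmem
    obtain ⟨j, hBj⟩ := Set.mem_iUnion.mp hBmem
    rcases le_total i j with hij | hij
    · exact Or.inr (key A B hA hB hAB i j hij hAi hBj)
    · exact Or.inl (key B A hB hA (by rwa [Set.inter_comm] at hAB) j i hij hBj hAi)
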